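/- Terms typable in the annotation-free bidirectional system restricted to base-type mode switches are β-normal: for every typing context Γ, term e, and type A, if either Γ ⊢ e ⇒ A or Γ ⊢ e ⇐ A is derivable in that system, then e is β-normal. -/
import Mathlib

inductive Ty : Type
  | base : Ty
  | arr : Ty → Ty → Ty
deriving DecidableEq

inductive Tm : Type
  | var : Nat → Tm
  | lam : Tm → Tm
  | app : Tm → Tm → Tm
deriving DecidableEq

mutual
  inductive Syn : List Ty → Tm → Ty → Prop
    | var {Γ : List Ty} {n : Nat} {A : Ty} :
        Γ[n]? = some A → Syn Γ (.var n) A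
    | app {Γ e₁ e₂ A B} :
        Syn Γ e₁ (.arr A B) → Chk Γ e₂ A → Syn Γ (.app e₁ e₂) B

  inductive Chk : List Ty → Tm → Ty → Prop
    | sub {Γ e B} :
        Syn Γ e .base → Ty.base = B → Chk Γ e B
    | lam {Γ e A₁ A₂} :
        Chk (A₁ :: Γ) e A₂ → Chk Γ (.lam e) (.arr A₁ A₂)
end

def BetaNormal : Tm → Prop
  | .var _ => True
  | .lam e => BetaNormal e
  | .app e₁ e₂ => (∀ e' : Tm, e₁ ≠ .lam e') ∧ BetaNormal e₁ ∧ BetaNormal e₂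

lemma syn_not_lam {Γ e A} (h : Syn Γ (.lam e) A) : False := by
  cases h

lemma main : (∀ Γ e A, Syn Γ e A → BetaNormal e) ∧ (∀ Γ e A, Chk Γ e A → BetaNormal e) := by
  refine ⟨fun Γ e A h => ?_, fun Γ e A h => ?_⟩
  · exact Syn.rec (motive_1 := fun _ e _ _ => BetaNormal e)
      (motive_2 := fun _ e _ _ => BetaNormal e)
      (fun _ => trivial)
      (fun h1 _ ih1 ih2 => ⟨fun e' hne => by subst hne; exact syn_not_lam h1, ih1, ih2⟩)
      (fun _ _ ih => ih)
      (fun _ ih => ih) h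
  · exact Chk.rec (motive_1 := fun _ e _ _ => BetaNormal e)
      (motive_2 := fun _ e _ _ => BetaNormal e)
      (fun _ => trivial)
      (fun h1 _ ih1 ih2 => ⟨fun e' hne => by subst hne; exact syn_not_lam h1, ih1, ih2⟩)
      (fun _ _ ih => ih)
      (fun _ ih => ih) h

/-- Terms typable in the annotation-free bidirectional system restricted to
    base-type mode switches are β-normal. -/
theorem typable_beta_normal (Γ : List Ty) (e : Tm) (A : Ty)
    (h : Syn Γ e A ∨ Chk Γ e A) : BetaNormal e := by
  rcases h with h | h
  · exact main.1 Γ e A h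
  · exact main.2 Γ e A h
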